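/- arXiv:2212.13199 — 3 statements merged into one kernel-verified Lean document; each statement's English description precedes it below -/
import Mathlib

section
/- Let 𝒜 be a finite set of pairwise disjoint bounded open intervals in ℝ, each of length greater than a > 0. Then there exists a subset ℬ ⊆ 𝒜 such that the total length of intervals in ℬ is at least one third of the total length of intervals in 𝒜, and any two distinct intervals in ℬ are at distance greater than a from each other. -/
/-!
Greedy selection: take a longest interval `p`, discard every interval within distance `a`
of it, and recurse on the rest. Since the intervals are disjoint and longer than `a`, at most
one of them ends in `[p₁ - a, p₁]` and at most one starts in `[p₂, p₂ + a]`, so at most three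
intervals, each no longer than `p`, are discarded together with `p`.
-/

open Finset

theorem Finset.exists_pairwise_not_rel_sum_le_mul {α : Type*} [DecidableEq α]
    (R : α → α → Prop) [DecidableRel R] (hR : ∀ p q, R p q → R q p) (w : α → ℝ) (k : ℝ)
    (𝒜 : Finset α)
    (hgreedy : ∀ 𝒞 ⊆ 𝒜, 𝒞.Nonempty →
      ∃ p ∈ 𝒞, R p p ∧ ∑ q ∈ 𝒞 with R p q, w q ≤ k * w p) :
    ∃ ℬ ⊆ 𝒜, ∑ q ∈ 𝒜, w q ≤ k * ∑ q ∈ ℬ, w q ∧ (ℬ : Set α).Pairwise (fun p q ↦ ¬R p q) := by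
  induction 𝒜 using Finset.strongInduction with
  | _ 𝒜 ih =>
    rcases 𝒜.eq_empty_or_nonempty with rfl | h𝒜
    · exact ⟨∅, by simp⟩
    obtain ⟨p, hp, hpp, hnear⟩ := hgreedy 𝒜 subset_rfl h𝒜
    have hrest : (𝒜.filter fun q ↦ ¬R p q) ⊂ 𝒜 := filter_ssubset.2 ⟨p, hp, not_not.2 hpp⟩
    obtain ⟨ℬ, hℬ, hsum, hpair⟩ := ih _ hrest
      fun 𝒞 h𝒞 ↦ hgreedy 𝒞 (h𝒞.trans (filter_subset _ _))
    have hfar : ∀ q ∈ ℬ, ¬R p q := fun q hq ↦ (mem_filter.1 (hℬ hq)).2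
    have hpℬ : p ∉ ℬ := fun h ↦ hfar p h hpp
    refine ⟨insert p ℬ, insert_subset hp (hℬ.trans (filter_subset _ _)), ?_, ?_⟩
    · rw [sum_insert hpℬ, ← sum_filter_add_sum_filter_not 𝒜 (R p)]
      linarith
    · rw [coe_insert, Set.pairwise_insert]
      exact ⟨hpair, fun q hq _ ↦ ⟨hfar q hq, fun h ↦ hfar q hq (hR q p h)⟩⟩

theorem le_or_le_of_disjoint_Ioo {α : Type*} [LinearOrder α] [DenselyOrdered α]
    {a₁ a₂ b₁ b₂ : α} (ha : a₁ < a₂) (hb : b₁ < b₂)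
    (h : Disjoint (Set.Ioo a₁ a₂) (Set.Ioo b₁ b₂)) : a₂ ≤ b₁ ∨ b₂ ≤ a₁ := by
  rw [Set.Ioo_disjoint_Ioo] at h
  by_contra! hlt
  exact not_lt.2 h (lt_min (max_lt ha hlt.1) (max_lt hlt.2 hb))

/-- The distance between the open intervals `(p.1, p.2)` and `(q.1, q.2)`, when disjoint. -/
def intervalGap (p q : ℝ × ℝ) : ℝ := max (q.1 - p.2) (p.1 - q.2)

theorem intervalGap_comm (p q : ℝ × ℝ) : intervalGap p q = intervalGap q p :=
  max_comm _ _

section Segments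

variable {a : ℝ} {𝒞 : Finset (ℝ × ℝ)}

theorem card_filter_intervalGap_le_three (ha : 0 ≤ a) (hlen : ∀ p ∈ 𝒞, a < p.2 - p.1)
    (hdisj : ∀ p ∈ 𝒞, ∀ q ∈ 𝒞, p ≠ q → Disjoint (Set.Ioo p.1 p.2) (Set.Ioo q.1 q.2))
    {p : ℝ × ℝ} (hp : p ∈ 𝒞) : #(𝒞.filter fun q ↦ intervalGap p q ≤ a) ≤ 3 := by
  have hsep : ∀ q ∈ 𝒞, ∀ r ∈ 𝒞, q ≠ r → q.2 ≤ r.1 ∨ r.2 ≤ q.1 := fun q hq r hr ↦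
    le_or_le_of_disjoint_Ioo (by linarith [hlen q hq]) (by linarith [hlen r hr]) ∘ hdisj q hq r hr
  set L := 𝒞.filter fun q ↦ q.2 ≤ p.1 ∧ p.1 - q.2 ≤ a
  set R := 𝒞.filter fun q ↦ p.2 ≤ q.1 ∧ q.1 - p.2 ≤ a
  have hL : #L ≤ 1 := card_le_one.2 fun q hq r hr ↦ by
    simp only [L, mem_filter] at hq hr
    by_contra hqr
    rcases hsep q hq.1 r hr.1 hqr with h | h <;>
      linarith [hlen q hq.1, hlen r hr.1]
  have hR : #R ≤ 1 := card_le_one.2 fun q hq r hr ↦ by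
    simp only [R, mem_filter] at hq hr
    by_contra hqr
    rcases hsep q hq.1 r hr.1 hqr with h | h <;>
      linarith [hlen q hq.1, hlen r hr.1]
  have hsub : (𝒞.filter fun q ↦ intervalGap p q ≤ a) ⊆ {p} ∪ L ∪ R := by
    intro q hq
    simp only [mem_filter, intervalGap, max_le_iff] at hq
    by_cases hqp : p = q
    · simp [hqp]
    simp only [mem_union, mem_singleton, L, R, mem_filter]
    rcases hsep p hp q hq.1 hqp with h | h
    · exact Or.inr ⟨hq.1, h, hq.2.1⟩
    · exact Or.inl (Or.inr ⟨hq.1, h, hq.2.2⟩)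
  calc #(𝒞.filter fun q ↦ intervalGap p q ≤ a) ≤ #({p} ∪ L ∪ R) := card_le_card hsub
    _ ≤ #({p} ∪ L) + #R := card_union_le _ _
    _ ≤ #({p} : Finset (ℝ × ℝ)) + #L + #R := by gcongr; exact card_union_le _ _
    _ ≤ 3 := by rw [card_singleton]; omega

theorem exists_sum_filter_intervalGap_le (ha : 0 ≤ a) (hlen : ∀ p ∈ 𝒞, a < p.2 - p.1)
    (hdisj : ∀ p ∈ 𝒞, ∀ q ∈ 𝒞, p ≠ q → Disjoint (Set.Ioo p.1 p.2) (Set.Ioo q.1 q.2))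
    (h𝒞 : 𝒞.Nonempty) : ∃ p ∈ 𝒞, intervalGap p p ≤ a ∧
      ∑ q ∈ 𝒞 with intervalGap p q ≤ a, (q.2 - q.1) ≤ 3 * (p.2 - p.1) := by
  obtain ⟨p, hp, hmax⟩ := 𝒞.exists_max_image (fun q ↦ q.2 - q.1) h𝒞
  have hplen := hlen p hp
  refine ⟨p, hp, by simp only [intervalGap, max_self]; linarith, ?_⟩
  calc ∑ q ∈ 𝒞 with intervalGap p q ≤ a, (q.2 - q.1)
      ≤ #(𝒞.filter fun q ↦ intervalGap p q ≤ a) • (p.2 - p.1) :=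
        sum_le_card_nsmul _ _ _ fun q hq ↦ hmax q (mem_filter.1 hq).1
    _ ≤ 3 * (p.2 - p.1) := by
        rw [nsmul_eq_mul]
        gcongr
        · linarith
        · exact_mod_cast card_filter_intervalGap_le_three ha hlen hdisj hp

end Segments

/-- Lemma about segments (Section 6.3): from a finite family `𝒜` of pairwise
disjoint bounded open intervals (represented by their pairs of endpoints), each of
length `> a > 0`, one can select a subfamily `ℬ` of total length `≥ ‖𝒜‖/3` whose
members are pairwise at distance `> a`. The distance between two disjoint open
intervals `(p₁,p₂)` and `(q₁,q₂)` is `max (q₁ - p₂) (p₁ - q₂)`. -/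
theorem stmt4 (a : ℝ) (ha : 0 < a) (𝒜 : Finset (ℝ × ℝ))
    (hlen : ∀ p ∈ 𝒜, a < p.2 - p.1)
    (hdisj : ∀ p ∈ 𝒜, ∀ q ∈ 𝒜, p ≠ q → Disjoint (Set.Ioo p.1 p.2) (Set.Ioo q.1 q.2)) :
    ∃ ℬ ⊆ 𝒜,
      (∑ p ∈ ℬ, (p.2 - p.1)) ≥ (1 / 3) * ∑ p ∈ 𝒜, (p.2 - p.1) ∧
      ∀ p ∈ ℬ, ∀ q ∈ ℬ, p ≠ q → a < max (q.1 - p.2) (p.1 - q.2) := by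
  obtain ⟨ℬ, hℬ, hsum, hpair⟩ := exists_pairwise_not_rel_sum_le_mul
    (fun p q ↦ intervalGap p q ≤ a) (fun p q h ↦ intervalGap_comm p q ▸ h)
    (fun p ↦ p.2 - p.1) 3 𝒜 fun 𝒞 h𝒞 ↦ exists_sum_filter_intervalGap_le ha.le
      (fun p hp ↦ hlen p (h𝒞 hp)) (fun p hp q hq ↦ hdisj p (h𝒞 hp) q (h𝒞 hq))
  exact ⟨ℬ, hℬ, by linarith, fun p hp q hq hpq ↦ not_le.1 (hpair hp hq hpq)⟩
end

section
/- Fix ρ > 0, N ≥ 2 an integer, μ = N/(N-1), and K = 1 + ⌊log_μ(2/ρ)⌋. Let I ⊂ ℝ be a segment with |I| ≥ N^K and let P ⊆ ℕ ∩ I be a set of 'jumpers' with #P ≥ ρ·|I|. Then there exists a subsegment J ⊆ I of length ≥ |I|/N^K such that when J is subdivided into N congruent pieces, each piece contains at least one element of P. -/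
/-!
Start from `I` itself, whose density is at least `ρ`. If a segment of density `δ` is not
regular, one of its `N` pieces contains no jumper, so the others, `N - 1` pieces of relative
length `1/N` each, share all of its jumpers, and one of them has density at least `μ δ`.
After `j` unsuccessful subdivisions the density exceeds `μ^j ρ` while the length is still
at least `1`; since a segment of length `≥ 1` contains at most twice its length of integers,
and `μ^K ρ > 2`, a regular segment must appear within `K` steps.
-/

open Finset

noncomputable def pointsIn (P : Finset ℕ) (a b : ℝ) : Finset ℕ :=
  P.filter fun p => (p : ℝ) ∈ Set.Icc a b

def IsRegularSegment (P : Finset ℕ) (N : ℕ) (u v : ℝ) : Prop :=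
  ∀ k : ℕ, k < N → ∃ p ∈ P,
    (p : ℝ) ∈ Set.Icc (u + k * ((v - u) / N)) (u + (k + 1) * ((v - u) / N))

lemma card_pointsIn_le (P : Finset ℕ) {a b : ℝ} (hab : a ≤ b) :
    ((pointsIn P a b).card : ℝ) ≤ b - a + 1 := by
  set s := pointsIn P a b
  rcases s.eq_empty_or_nonempty with hs | hs
  · simp only [hs, card_empty, Nat.cast_zero]
    linarith
  have hmem : ∀ p ∈ s, a ≤ p ∧ (p : ℝ) ≤ b := fun p hp => (mem_filter.1 hp).2
  have hsub : s ⊆ Icc (s.min' hs) (s.max' hs) := fun p hp =>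
    mem_Icc.2 ⟨min'_le s p hp, le_max' s p hp⟩
  have hcard : s.card ≤ s.max' hs + 1 - s.min' hs :=
    (card_le_card hsub).trans (Nat.card_Icc _ _).le
  have hminmax := s.min'_le_max' hs
  calc (s.card : ℝ) ≤ ((s.max' hs + 1 - s.min' hs : ℕ) : ℝ) := by exact_mod_cast hcard
    _ = s.max' hs + 1 - s.min' hs := by
      push_cast [Nat.cast_sub (by omega : s.min' hs ≤ s.max' hs + 1)]; ring
    _ ≤ b - a + 1 := by linarith [(hmem _ (s.max'_mem hs)).2, (hmem _ (s.min'_mem hs)).1]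

lemma exists_lt_le_le_succ {N : ℕ} (hN : 0 < N) {t : ℝ} (ht₀ : 0 ≤ t) (htN : t ≤ N) :
    ∃ k : ℕ, k < N ∧ (k : ℝ) ≤ t ∧ t ≤ k + 1 := by
  rcases htN.lt_or_eq with ht | rfl
  · exact ⟨⌊t⌋₊, (Nat.floor_lt ht₀).2 ht, Nat.floor_le ht₀,
      (Nat.lt_floor_add_one t).le⟩
  · refine ⟨N - 1, by omega, ?_, ?_⟩ <;> simp [Nat.cast_sub (by omega : 1 ≤ N)]

lemma exists_piece_mem {N : ℕ} (hN : 0 < N) {u v x : ℝ} (huv : u < v) (hx : x ∈ Set.Icc u v) :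
    ∃ k < N, x ∈ Set.Icc (u + k * ((v - u) / N)) (u + (k + 1) * ((v - u) / N)) := by
  have hd : 0 < (v - u) / N := div_pos (by linarith) (by exact_mod_cast hN)
  obtain ⟨k, hk, hkt, htk⟩ := exists_lt_le_le_succ hN (t := (x - u) / ((v - u) / N))
    (div_nonneg (by linarith [hx.1]) hd.le)
    (by rw [div_le_iff₀ hd, mul_div_cancel₀ _ (by exact_mod_cast hN.ne')]; linarith [hx.2])
  rw [le_div_iff₀ hd] at hkt
  rw [div_le_iff₀ hd] at htk
  exact ⟨k, hk, by linarith, by linarith⟩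

lemma exists_piece_card_ge_of_not_regular (P : Finset ℕ) {N : ℕ} (hN : 2 ≤ N) {u v : ℝ}
    (huv : u < v) (hreg : ¬IsRegularSegment P N u v) :
    ∃ k < N, (pointsIn P u v).card ≤
      (N - 1) * (pointsIn P (u + k * ((v - u) / N)) (u + (k + 1) * ((v - u) / N))).card := by
  set f : ℕ → ℕ := fun k =>
    (pointsIn P (u + k * ((v - u) / N)) (u + (k + 1) * ((v - u) / N))).card
  obtain ⟨k₀, hk₀, hempty⟩ : ∃ k₀ < N, f k₀ = 0 := by
    simp only [IsRegularSegment, not_forall, not_exists, not_and] at hreg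
    obtain ⟨k₀, hk₀, h⟩ := hreg
    exact ⟨k₀, hk₀, card_eq_zero.2 (filter_eq_empty_iff.2 h)⟩
  have hcover : (pointsIn P u v).card ≤ ∑ k ∈ (range N).erase k₀, f k := by
    rw [sum_erase _ hempty]
    refine (card_le_card fun p hp => ?_).trans card_biUnion_le
    obtain ⟨hpP, hp⟩ := mem_filter.1 hp
    obtain ⟨k, hk, hpk⟩ := exists_piece_mem (N := N) (by omega) huv hp
    exact mem_biUnion.2 ⟨k, mem_range.2 hk, mem_filter.2 ⟨hpP, hpk⟩⟩
  have hcard : ((range N).erase k₀).card = N - 1 := by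
    rw [card_erase_of_mem (mem_range.2 hk₀), card_range]
  obtain ⟨k, hk, hle⟩ := exists_le_of_sum_le (s := (range N).erase k₀)
    (f := fun _ => (pointsIn P u v).card) (g := fun k => (N - 1) * f k)
    (by rw [← card_pos, hcard]; exact Nat.sub_pos_of_lt hN)
    (by rw [sum_const, hcard, smul_eq_mul, ← mul_sum]; exact Nat.mul_le_mul_left _ hcover)
  exact ⟨k, mem_range.1 (mem_of_mem_erase hk), hle⟩

lemma exists_denser_piece_of_not_regular (P : Finset ℕ) {N : ℕ} (hN : 2 ≤ N) {u v δ : ℝ}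
    (huv : u < v) (hreg : ¬IsRegularSegment P N u v)
    (hdense : δ * (v - u) ≤ (pointsIn P u v).card) :
    ∃ a b, u ≤ a ∧ b ≤ v ∧ b - a = (v - u) / N ∧
      N / (N - 1) * δ * (b - a) ≤ (pointsIn P a b).card := by
  obtain ⟨k, hk, hcard⟩ := exists_piece_card_ge_of_not_regular P hN huv hreg
  have hN₁ : (1 : ℝ) < N := by exact_mod_cast hN
  have hk₁ : (k : ℝ) + 1 ≤ N := by exact_mod_cast hk
  set d := (v - u) / N
  have hd₀ : 0 < d := div_pos (sub_pos.2 huv) (by linarith)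
  have hNd : N * d = v - u := mul_div_cancel₀ _ (by linarith)
  have hcard' : ((pointsIn P u v).card : ℝ) ≤
      (N - 1) * (pointsIn P (u + k * d) (u + (k + 1) * d)).card := by
    rw [← Nat.cast_pred (by omega), ← Nat.cast_mul]
    exact_mod_cast hcard
  refine ⟨u + k * d, u + (k + 1) * d, by nlinarith, by nlinarith, by ring, ?_⟩
  calc N / (N - 1) * δ * (u + (k + 1) * d - (u + k * d)) = δ * (v - u) / (N - 1) := by
        rw [← hNd]; field_simp; ring
    _ ≤ (pointsIn P (u + k * d) (u + (k + 1) * d)).card := by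
        rw [div_le_iff₀ (by linarith)]; linarith

theorem exists_regular_subsegment (P : Finset ℕ) {N : ℕ} (hN : 2 ≤ N) (n : ℕ) {u v δ : ℝ}
    (hlen : (N : ℝ) ^ n ≤ v - u) (hδ : 2 < ((N : ℝ) / (N - 1)) ^ n * δ)
    (hdense : δ * (v - u) ≤ (pointsIn P u v).card) :
    ∃ u' v', u ≤ u' ∧ v' ≤ v ∧ (v - u) / (N : ℝ) ^ n ≤ v' - u' ∧
      IsRegularSegment P N u' v' := by
  induction n generalizing u v δ with
  | zero =>
    simp only [pow_zero, one_mul] at hlen hδ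
    nlinarith [card_pointsIn_le P (by linarith : u ≤ v)]
  | succ n ih =>
    have hN₁ : (1 : ℝ) ≤ N := by exact_mod_cast hN.trans' one_le_two
    have hN₀ : (0 : ℝ) < N := by linarith
    have huv : u < v := by linarith [pow_pos hN₀ (n + 1)]
    by_cases hreg : IsRegularSegment P N u v
    · exact ⟨u, v, le_rfl, le_rfl,
        div_le_self (sub_nonneg.2 huv.le) (one_le_pow₀ hN₁), hreg⟩
    obtain ⟨a, b, hua, hbv, hab, hdense'⟩ :=
      exists_denser_piece_of_not_regular P hN huv hreg hdense
    have hlen' : (N : ℝ) ^ n ≤ b - a := by rwa [hab, le_div_iff₀ hN₀, ← pow_succ]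
    have hδ' : 2 < ((N : ℝ) / (N - 1)) ^ n * (N / (N - 1) * δ) := by
      convert hδ using 1; ring
    obtain ⟨u', v', hau', hv'b, hlen'', hreg'⟩ := ih hlen' hδ' hdense'
    refine ⟨u', v', hua.trans hau', hv'b.trans hbv, ?_, hreg'⟩
    rwa [hab, div_div, ← pow_succ'] at hlen''


lemma lt_pow_one_add_floor_logb {b : ℝ} (hb : 1 < b) (x : ℝ) :
    x < b ^ (1 + ⌊Real.logb b x⌋₊) := by
  rcases le_or_gt x 0 with hx | hx
  · exact hx.trans_lt (by positivity)
  · rw [← Real.rpow_natCast, ← Real.logb_lt_iff_lt_rpow hb hx]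
    push_cast
    linarith [Nat.lt_floor_add_one (Real.logb b x)]

/-- Proposition 6 (existence of regular segments): if the segment `I = [c, c']` has
length `≥ N^K` (where `μ = N/(N-1)` and `K = 1 + ⌊log_μ (2/ρ)⌋`) and the set `P` of
jumpers in `I` has cardinality `≥ ρ·|I|`, then `I` contains a regular subsegment
`J = [u, v]` of length `≥ |I|/N^K`: each of the `N` congruent pieces of `J` contains
a jumper. -/
theorem stmt12 (ρ : ℝ) (hρ : 0 < ρ) (N : ℕ) (hN : 2 ≤ N)
    (μ : ℝ) (hμ : μ = (N : ℝ) / ((N : ℝ) - 1))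
    (K : ℕ) (hK : K = 1 + ⌊Real.logb μ (2 / ρ)⌋₊)
    (c c' : ℝ) (hlen : (N : ℝ) ^ K ≤ c' - c)
    (P : Finset ℕ) (hP : ∀ p ∈ P, (p : ℝ) ∈ Set.Icc c c')
    (hdense : ρ * (c' - c) ≤ P.card) :
    ∃ u v : ℝ, c ≤ u ∧ v ≤ c' ∧ (c' - c) / (N : ℝ) ^ K ≤ v - u ∧
      ∀ k : ℕ, k < N → ∃ p ∈ P,
        (p : ℝ) ∈ Set.Icc (u + k * ((v - u) / N)) (u + (k + 1) * ((v - u) / N)) := by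
  have hμ₁ : 1 < μ := by
    have hN₁ : (1 : ℝ) < N := by exact_mod_cast hN
    rw [hμ, one_lt_div (by linarith)]
    linarith
  have hgrowth : 2 < ((N : ℝ) / (N - 1)) ^ K * ρ := by
    have h := lt_pow_one_add_floor_logb hμ₁ (2 / ρ)
    rwa [← hK, hμ, div_lt_iff₀ hρ] at h
  have hall : pointsIn P c c' = P := filter_true_of_mem hP
  exact exists_regular_subsegment P hN K hlen hgrowth (by rwa [hall])
end

section
/- Let 𝒜_d be a finite collection of pairwise disjoint open intervals in [0, l], each of length > (4/5)d, whose union has total length ≥ ε·l. Suppose to each I ∈ 𝒜_d is assigned a nonnegative 'area' a(Q_I) ≥ c·d·|I| for a constant c > 0, and areas of quadrilaterals over intervals at mutual distance > (4/5)d add up (do not overlap). Then there is a subfamily ℬ ⊆ 𝒜_d, with pairwise distances > (4/5)d, such that Σ_{I ∈ ℬ} a(Q_I) ≥ (c/3)·ε·d·l. -/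
/-!
Order the intervals by their left endpoints and split them by the parity of their position.
Between two intervals of the same parity lies a third interval of the family, of length `> (4/5)d`,
so the two are more than `(4/5)d` apart. One of the two classes carries at least half of the total
area, and the total area is at least `c·d·ε·l`.
-/

open Finset Set

section IntervalFamily

variable {s : Finset (ℝ × ℝ)}

lemma snd_le_fst_of_disjoint_Ioo {p q : ℝ × ℝ} (hq : q.1 < q.2)
    (h : Disjoint (Ioo p.1 p.2) (Ioo q.1 q.2)) (hpq : p.1 ≤ q.1) : p.2 ≤ q.1 := by
  rw [Set.Ioo_disjoint_Ioo, max_eq_right hpq] at h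
  exact (min_le_iff.mp h).resolve_right hq.not_ge

lemma injOn_fst_of_pairwiseDisjoint_Ioo (hpos : ∀ p ∈ s, p.1 < p.2)
    (hdisj : (s : Set (ℝ × ℝ)).PairwiseDisjoint fun p => Ioo p.1 p.2) :
    Set.InjOn Prod.fst (s : Set (ℝ × ℝ)) := by
  intro p hp q hq hpq
  by_contra hne
  have := snd_le_fst_of_disjoint_Ioo (hpos q hq) (hdisj hp hq hne) hpq.le
  linarith [hpos p hp]

noncomputable def leftRank (s : Finset (ℝ × ℝ)) (p : ℝ × ℝ) : ℕ := #{r ∈ s | r.1 < p.1}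

lemma exists_fst_between_of_even_leftRank_iff (hinj : Set.InjOn Prod.fst (s : Set (ℝ × ℝ)))
    {p q : ℝ × ℝ} (hp : p ∈ s) (hpq : p.1 < q.1)
    (hpar : Even (leftRank s p) ↔ Even (leftRank s q)) :
    ∃ r ∈ s, p.1 < r.1 ∧ r.1 < q.1 := by
  by_contra! hgap
  have hfilter : {r ∈ s | r.1 < q.1} = insert p {r ∈ s | r.1 < p.1} := by
    ext r
    simp only [mem_filter, Finset.mem_insert]
    constructor
    · rintro ⟨hr, hrq⟩
      rcases (not_lt.mp fun hpr => (hgap r hr hpr).not_gt hrq).lt_or_eq with hrp | hrp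
      · exact Or.inr ⟨hr, hrp⟩
      · exact Or.inl (hinj hr hp hrp)
    · rintro (rfl | ⟨hr, hrp⟩)
      exacts [⟨hp, hpq⟩, ⟨hr, hrp.trans hpq⟩]
  have hrank : leftRank s q = leftRank s p + 1 := by
    rw [leftRank, hfilter, card_insert_of_notMem (by simp), leftRank]
  rw [hrank, Nat.even_add_one] at hpar
  tauto

lemma lt_max_sub_of_even_leftRank_iff {δ : ℝ} (hlen : ∀ p ∈ s, δ < p.2 - p.1)
    (hpos : ∀ p ∈ s, p.1 < p.2)
    (hdisj : (s : Set (ℝ × ℝ)).PairwiseDisjoint fun p => Ioo p.1 p.2)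
    {p q : ℝ × ℝ} (hp : p ∈ s) (hq : q ∈ s) (hpq : p ≠ q)
    (hpar : Even (leftRank s p) ↔ Even (leftRank s q)) :
    δ < max (q.1 - p.2) (p.1 - q.2) := by
  have hinj := injOn_fst_of_pairwiseDisjoint_Ioo hpos hdisj
  have key : ∀ p ∈ s, ∀ q ∈ s, (Even (leftRank s p) ↔ Even (leftRank s q)) →
      p.1 < q.1 → δ < q.1 - p.2 := by
    intro p hp q hq hpar hlt
    obtain ⟨r, hr, hpr, hrq⟩ := exists_fst_between_of_even_leftRank_iff hinj hp hlt hpar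
    have hpr_ne : p ≠ r := fun h => hpr.ne (congrArg Prod.fst h)
    have hrq_ne : r ≠ q := fun h => hrq.ne (congrArg Prod.fst h)
    have h₁ := snd_le_fst_of_disjoint_Ioo (hpos r hr) (hdisj hp hr hpr_ne) hpr.le
    have h₂ := snd_le_fst_of_disjoint_Ioo (hpos q hq) (hdisj hr hq hrq_ne) hrq.le
    linarith [hlen r hr]
  rcases lt_or_gt_of_ne fun h => hpq (hinj hp hq h) with hlt | hlt
  · exact lt_max_of_lt_left (key p hp q hq hpar hlt)
  · exact lt_max_of_lt_right (key q hq p hp hpar.symm hlt)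

lemma exists_separated_split {δ : ℝ} (hδ : 0 ≤ δ) (hlen : ∀ p ∈ s, δ < p.2 - p.1)
    (hdisj : (s : Set (ℝ × ℝ)).PairwiseDisjoint fun p => Ioo p.1 p.2) :
    ∃ t ⊆ s, (t : Set (ℝ × ℝ)).Pairwise (fun p q => δ < max (q.1 - p.2) (p.1 - q.2)) ∧
      ((s \ t : Finset (ℝ × ℝ)) : Set (ℝ × ℝ)).Pairwise
        (fun p q => δ < max (q.1 - p.2) (p.1 - q.2)) := by
  have hpos : ∀ p ∈ s, p.1 < p.2 := fun p hp => by linarith [hlen p hp]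
  refine ⟨{p ∈ s | Even (leftRank s p)}, filter_subset _ _, ?_, ?_⟩
  · intro p hp q hq hpq
    simp only [coe_filter, Set.mem_ofPred_eq] at hp hq
    exact lt_max_sub_of_even_leftRank_iff hlen hpos hdisj hp.1 hq.1 hpq (iff_of_true hp.2 hq.2)
  · rw [← filter_not]
    intro p hp q hq hpq
    simp only [coe_filter, Set.mem_ofPred_eq] at hp hq
    exact lt_max_sub_of_even_leftRank_iff hlen hpos hdisj hp.1 hq.1 hpq (iff_of_false hp.2 hq.2)

end IntervalFamily

theorem stmt19_general (d l ε c : ℝ) (hd : 0 < d) (hc : 0 < c)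
    (𝒜 : Finset (ℝ × ℝ))
    (hlen : ∀ p ∈ 𝒜, (4 / 5) * d < p.2 - p.1)
    (hdisj : ∀ p ∈ 𝒜, ∀ q ∈ 𝒜, p ≠ q → Disjoint (Set.Ioo p.1 p.2) (Set.Ioo q.1 q.2))
    (htot : ε * l ≤ ∑ p ∈ 𝒜, (p.2 - p.1))
    (A : ℝ × ℝ → ℝ) (hA0 : ∀ p ∈ 𝒜, 0 ≤ A p)
    (hA : ∀ p ∈ 𝒜, c * d * (p.2 - p.1) ≤ A p) :
    ∃ ℬ ⊆ 𝒜,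
      (∀ p ∈ ℬ, ∀ q ∈ ℬ, p ≠ q → (4 / 5) * d < max (q.1 - p.2) (p.1 - q.2)) ∧
      (c / 3) * ε * d * l ≤ ∑ p ∈ ℬ, A p := by
  obtain ⟨ℬ, hℬ, hsep, hsep'⟩ := exists_separated_split (by positivity) hlen hdisj
  have htotal : c * d * (ε * l) ≤ ∑ p ∈ 𝒜, A p :=
    calc c * d * (ε * l) ≤ ∑ p ∈ 𝒜, c * d * (p.2 - p.1) := by
          rw [← mul_sum]; gcongr
      _ ≤ ∑ p ∈ 𝒜, A p := sum_le_sum hA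
  have hsplit := sum_sdiff hℬ (f := A)
  have hℬ0 : 0 ≤ ∑ p ∈ ℬ, A p := sum_nonneg fun p hp => hA0 p (hℬ hp)
  have hℬ0' : 0 ≤ ∑ p ∈ 𝒜 \ ℬ, A p := sum_nonneg fun p hp => hA0 p (sdiff_subset hp)
  rcases le_total (∑ p ∈ ℬ, A p) (∑ p ∈ 𝒜 \ ℬ, A p) with h | h
  · exact ⟨𝒜 \ ℬ, sdiff_subset, hsep', by linarith⟩
  · exact ⟨ℬ, hℬ, hsep, by linarith⟩

/-- Final counting step in the proof of Theorem 2: given a finite family `𝒜` of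
pairwise disjoint open intervals in `[0, l]`, each of length `> (4/5)d`, of total
length `≥ ε·l`, and areas `A I ≥ c·d·|I|`, there is a subfamily `ℬ` whose members
are pairwise at distance `> (4/5)d` and whose total area is `≥ (c/3)·ε·d·l`.
Intervals are represented by their pairs of endpoints; the distance between
disjoint intervals `(p₁,p₂)`, `(q₁,q₂)` is `max (q₁ - p₂) (p₁ - q₂)`. -/
theorem stmt19 (d l ε c : ℝ) (hd : 0 < d) (hε : 0 < ε) (hc : 0 < c)
    (𝒜 : Finset (ℝ × ℝ))
    (hsub : ∀ p ∈ 𝒜, 0 ≤ p.1 ∧ p.2 ≤ l)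
    (hlen : ∀ p ∈ 𝒜, (4 / 5) * d < p.2 - p.1)
    (hdisj : ∀ p ∈ 𝒜, ∀ q ∈ 𝒜, p ≠ q → Disjoint (Set.Ioo p.1 p.2) (Set.Ioo q.1 q.2))
    (htot : ε * l ≤ ∑ p ∈ 𝒜, (p.2 - p.1))
    (A : ℝ × ℝ → ℝ) (hA0 : ∀ p ∈ 𝒜, 0 ≤ A p)
    (hA : ∀ p ∈ 𝒜, c * d * (p.2 - p.1) ≤ A p) :
    ∃ ℬ ⊆ 𝒜,
      (∀ p ∈ ℬ, ∀ q ∈ ℬ, p ≠ q → (4 / 5) * d < max (q.1 - p.2) (p.1 - q.2)) ∧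
      (c / 3) * ε * d * l ≤ ∑ p ∈ ℬ, A p :=
  stmt19_general d l ε c hd hc 𝒜 hlen hdisj htot A hA0 hA
end
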